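/- Let ε > 0 and let γ⁽ᵗ⁾ ∈ ℝ^{p×d}. Define the surrogate function g_ε(γ | γ⁽ᵗ⁾) = (1/n²)·Σ_{k,l=1}^n [B_kl·1{B_kl<0} / (2·(a_kl(γ⁽ᵗ⁾) + ε))]·a_kl(γ)² + (1/n²)·Σ_{k,l=1}^n B_kl·1{B_kl>0}·tr(γᵀ(Z_k − Z_l)(Z_k − Z_l)ᵀγ⁽ᵗ⁾)/(a_kl(γ⁽ᵗ⁾) + ε) + c⁽ᵗ⁾, where the constant c⁽ᵗ⁾ is chosen so that g_ε(γ⁽ᵗ⁾ | γ⁽ᵗ⁾) = V²_{n,ε}(γ⁽ᵗ⁾). Then g_ε(γ | γ⁽ᵗ⁾) ≤ V²_{n,ε}(γ) for every γ ∈ ℝ^{p×d}, with equality at γ = γ⁽ᵗ⁾. -/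

import Mathlib

open Matrix

/-- Euclidean norm of a vector in `ℝ^m`. -/
noncomputable def enorm {m : ℕ} (v : Fin m → ℝ) : ℝ := Real.sqrt (∑ i, v i ^ 2)

/-- `a_kl(γ) = ‖γᵀ(Z_k − Z_l)‖₂`. -/
noncomputable def akl (n p d : ℕ) (Z : Fin n → Fin p → ℝ)
    (γ : Matrix (Fin p) (Fin d) ℝ) (k l : Fin n) : ℝ :=
  enorm (γᵀ *ᵥ (Z k - Z l))

/-- The perturbed objective `V²_{n,ε}`. -/
noncomputable def Vne (n p d : ℕ) (Z : Fin n → Fin p → ℝ) (B : Fin n → Fin n → ℝ)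
    (ε : ℝ) (γ : Matrix (Fin p) (Fin d) ℝ) : ℝ :=
  (1 / (n : ℝ) ^ 2) * ∑ k, ∑ l,
    (akl n p d Z γ k l - ε * Real.log (1 + akl n p d Z γ k l / ε)) * B k l

/-- The non-constant part of the surrogate function `g_ε(· | γ⁽ᵗ⁾)`. -/
noncomputable def gbody (n p d : ℕ) (Z : Fin n → Fin p → ℝ) (B : Fin n → Fin n → ℝ)
    (ε : ℝ) (γt γ : Matrix (Fin p) (Fin d) ℝ) : ℝ :=
  (1 / (n : ℝ) ^ 2) * ∑ k, ∑ l,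
    ((if B k l < 0 then B k l else 0) / (2 * (akl n p d Z γt k l + ε))) *
      akl n p d Z γ k l ^ 2
  + (1 / (n : ℝ) ^ 2) * ∑ k, ∑ l,
      (if 0 < B k l then B k l else 0) *
        Matrix.trace (γᵀ * Matrix.vecMulVec (Z k - Z l) (Z k - Z l) * γt) /
          (akl n p d Z γt k l + ε)

/-!
Write `ρ_ε(a) = a − ε log(1 + a/ε)`, so that `V²_{n,ε}(γ) = n⁻² Σ B_kl ρ_ε(a_kl(γ))`, and
`ρ_ε'(a) = a/(a + ε)`. Two elementary bounds on `ρ_ε` around `t = a_kl(γ⁽ᵗ⁾)` give the minorization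
termwise: the tangent line `ρ_ε(t) + t/(t+ε)·(a − t) ≤ ρ_ε(a)` (convexity), which together with
Cauchy–Schwarz `tr(γᵀ(Z_k − Z_l)(Z_k − Z_l)ᵀγ⁽ᵗ⁾) ≤ a_kl(γ) a_kl(γ⁽ᵗ⁾)` handles `B_kl > 0`, and the
quadratic majorant `ρ_ε(a) ≤ ρ_ε(t) + (a² − t²)/(2(t+ε))` (concavity of `s ↦ ρ_ε(√s)`), which
handles `B_kl < 0` after multiplying by the negative weight. Both bounds are equalities at
`a = t`, so summing gives `g_ε(γ) − g_ε(γ⁽ᵗ⁾) ≤ V²_{n,ε}(γ) − V²_{n,ε}(γ⁽ᵗ⁾)`.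
-/

open Set

noncomputable def perturbedNorm (ε a : ℝ) : ℝ := a - ε * Real.log (1 + a / ε)

lemma hasDerivAt_perturbedNorm {ε x : ℝ} (hε : 0 < ε) (hx : 0 ≤ x) :
    HasDerivAt (perturbedNorm ε) (x / (x + ε)) x := by
  have hlog : HasDerivAt (fun y => Real.log (1 + y / ε)) (1 / ε / (1 + x / ε)) x :=
    (((hasDerivAt_id' x).div_const ε).const_add 1).log (by positivity)
  refine ((hasDerivAt_id' x).sub (hlog.const_mul ε)).congr_deriv ?_
  field_simp
  ring

lemma isMinOn_Ici_of_hasDerivAt {f f' : ℝ → ℝ} {a b : ℝ} (hab : a ≤ b)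
    (hf : ∀ x ∈ Ici a, HasDerivAt f (f' x) x) (hsign : ∀ x ∈ Ioi a, 0 ≤ (x - b) * f' x) :
    IsMinOn f (Ici a) b := by
  have hdiff : ∀ s ⊆ Ioi a, DifferentiableOn ℝ f s := fun s hs x hx =>
    (hf x (Ioi_subset_Ici_self (hs hx))).differentiableAt.differentiableWithinAt
  refine isMinOn_Ici_of_deriv (hf a self_mem_Ici).continuousAt (hf b hab).continuousAt
    (hdiff _ Ioo_subset_Ioi_self) (hdiff _ (Ioi_subset_Ioi hab)) (fun x hx => ?_) fun x hx => ?_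
  · rw [(hf x (Ioi_subset_Ici_self hx.1)).deriv]
    exact nonpos_of_mul_nonneg_right (hsign x hx.1) (sub_neg.2 hx.2)
  · have hxa : a < x := lt_of_le_of_lt hab hx
    rw [(hf x (Ioi_subset_Ici_self hxa)).deriv]
    exact nonneg_of_mul_nonneg_right (hsign x hxa) (sub_pos.2 hx)

lemma perturbedNorm_tangent_le {ε a b : ℝ} (hε : 0 < ε) (ha : 0 ≤ a) (hb : 0 ≤ b) :
    perturbedNorm ε b + b / (b + ε) * (a - b) ≤ perturbedNorm ε a := by
  have hmin : IsMinOn (fun x => perturbedNorm ε x - b / (b + ε) * x) (Ici 0) b := by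
    refine isMinOn_Ici_of_hasDerivAt hb
      (fun x hx => (hasDerivAt_perturbedNorm hε hx).sub ((hasDerivAt_id' x).const_mul _))
      fun x (hx : 0 < x) => ?_
    have hsign : (x - b) * (x / (x + ε) - b / (b + ε) * 1) =
        ε * (x - b) ^ 2 / ((x + ε) * (b + ε)) := by
      field_simp
      ring
    rw [hsign]
    positivity
  have := isMinOn_iff.1 hmin a ha
  linarith

lemma perturbedNorm_le_quadratic {ε a b : ℝ} (hε : 0 < ε) (ha : 0 ≤ a) (hb : 0 ≤ b) :
    perturbedNorm ε a ≤ perturbedNorm ε b + (a ^ 2 - b ^ 2) / (2 * (b + ε)) := by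
  have hsq (x : ℝ) : HasDerivAt (fun x : ℝ => x ^ 2 / (2 * (b + ε))) (x / (b + ε)) x := by
    refine ((hasDerivAt_pow 2 x).div_const _).congr_deriv ?_
    field_simp
    ring
  have hmin : IsMinOn (fun x => x ^ 2 / (2 * (b + ε)) - perturbedNorm ε x) (Ici 0) b := by
    refine isMinOn_Ici_of_hasDerivAt hb
      (fun x hx => (hsq x).sub (hasDerivAt_perturbedNorm hε hx)) fun x (hx : 0 < x) => ?_
    have hsign : (x - b) * (x / (b + ε) - x / (x + ε)) =
        x * (x - b) ^ 2 / ((x + ε) * (b + ε)) := by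
      field_simp
      ring
    rw [hsign]
    positivity
  have := isMinOn_iff.1 hmin a ha
  rw [sub_div]
  linarith

/-- The `(k, l)` summand of `gbody`, with weight `w = B_kl`, `t = a_kl(γ⁽ᵗ⁾)`, `a = a_kl(γ)`
and `T = tr(γᵀ(Z_k − Z_l)(Z_k − Z_l)ᵀγ⁽ᵗ⁾)`. -/
noncomputable def surrogateTerm (ε w t a T : ℝ) : ℝ :=
  (if w < 0 then w else 0) / (2 * (t + ε)) * a ^ 2 + (if 0 < w then w else 0) * T / (t + ε)

lemma surrogateTerm_sub_le {ε w t a T : ℝ} (hε : 0 < ε) (ht : 0 ≤ t) (ha : 0 ≤ a)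
    (hT : T ≤ a * t) :
    surrogateTerm ε w t a T - surrogateTerm ε w t t (t ^ 2) ≤
      w * (perturbedNorm ε a - perturbedNorm ε t) := by
  rcases lt_trichotomy w 0 with hw | rfl | hw
  · simp only [surrogateTerm, if_pos hw, if_neg (not_lt.2 hw.le)]
    have hquad := sub_le_iff_le_add'.2 (perturbedNorm_le_quadratic hε ha ht)
    calc _ = w * ((a ^ 2 - t ^ 2) / (2 * (t + ε))) := by ring
      _ ≤ _ := mul_le_mul_of_nonpos_left hquad hw.le
  · simp [surrogateTerm]
  · simp only [surrogateTerm, if_neg (not_lt.2 hw.le), if_pos hw]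
    have htangent := le_sub_iff_add_le'.2 (perturbedNorm_tangent_le hε ha ht)
    calc _ = w * (T - t ^ 2) / (t + ε) := by ring
      _ ≤ w * (a * t - t ^ 2) / (t + ε) := by gcongr
      _ = w * (t / (t + ε) * (a - t)) := by ring
      _ ≤ _ := by gcongr

lemma trace_transpose_mul_vecMulVec_mul {R m k : Type*} [CommSemiring R] [Fintype m]
    [Fintype k] (γ γ' : Matrix m k R) (z : m → R) :
    trace (γᵀ * vecMulVec z z * γ') = (γᵀ *ᵥ z) ⬝ᵥ (γ'ᵀ *ᵥ z) := by
  rw [mul_vecMulVec, vecMulVec_mul, trace_vecMulVec, mulVec_transpose γ']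

lemma dotProduct_le_enorm_mul_enorm {m : ℕ} (x y : Fin m → ℝ) :
    x ⬝ᵥ y ≤ _root_.enorm x * _root_.enorm y :=
  Real.sum_mul_le_sqrt_mul_sqrt _ _ _

lemma dotProduct_self_eq_enorm_sq {m : ℕ} (x : Fin m → ℝ) : x ⬝ᵥ x = _root_.enorm x ^ 2 := by
  rw [_root_.enorm, Real.sq_sqrt (by positivity)]
  simp only [dotProduct, sq]

lemma gbody_eq_sum_surrogateTerm (n p d : ℕ) (Z : Fin n → Fin p → ℝ) (B : Fin n → Fin n → ℝ)
    (ε : ℝ) (γt γ : Matrix (Fin p) (Fin d) ℝ) :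
    gbody n p d Z B ε γt γ = 1 / (n : ℝ) ^ 2 * ∑ k, ∑ l,
      surrogateTerm ε (B k l) (akl n p d Z γt k l) (akl n p d Z γ k l)
        (trace (γᵀ * vecMulVec (Z k - Z l) (Z k - Z l) * γt)) := by
  simp only [gbody, surrogateTerm, ← mul_add, ← Finset.sum_add_distrib]

/-- with c⁽ᵗ⁾ chosen so that `g_ε(γ⁽ᵗ⁾|γ⁽ᵗ⁾) = V²_{n,ε}(γ⁽ᵗ⁾)`,
the surrogate satisfies `g_ε(γ|γ⁽ᵗ⁾) ≤ V²_{n,ε}(γ)` for every γ, with equality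
at `γ = γ⁽ᵗ⁾`. -/
theorem stmt_11 (n p d : ℕ) (Z : Fin n → Fin p → ℝ) (B : Fin n → Fin n → ℝ)
    (ε : ℝ) (hε : 0 < ε) (γt : Matrix (Fin p) (Fin d) ℝ)
    (ct : ℝ) (hct : gbody n p d Z B ε γt γt + ct = Vne n p d Z B ε γt) :
    (∀ γ : Matrix (Fin p) (Fin d) ℝ,
        gbody n p d Z B ε γt γ + ct ≤ Vne n p d Z B ε γ) ∧
    gbody n p d Z B ε γt γt + ct = Vne n p d Z B ε γt := by
  refine ⟨fun γ => ?_, hct⟩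
  have hsum : gbody n p d Z B ε γt γ - gbody n p d Z B ε γt γt ≤
      Vne n p d Z B ε γ - Vne n p d Z B ε γt := by
    simp only [gbody_eq_sum_surrogateTerm, Vne, ← mul_sub, ← Finset.sum_sub_distrib]
    refine mul_le_mul_of_nonneg_left (Finset.sum_le_sum fun k _ => Finset.sum_le_sum fun l _ => ?_)
      (by positivity)
    rw [trace_transpose_mul_vecMulVec_mul γt, dotProduct_self_eq_enorm_sq, ← sub_mul, mul_comm]
    exact surrogateTerm_sub_le hε (Real.sqrt_nonneg _) (Real.sqrt_nonneg _)
      ((trace_transpose_mul_vecMulVec_mul γ γt _).trans_le (dotProduct_le_enorm_mul_enorm _ _))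
  linarith
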